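/- In the hitting-set graph G constructed from an instance (U, F_1, …, F_m) with |U| = n, if U' ⊆ U is a hitting set (i.e., U' ∩ F_i ≠ ∅ for every i ∈ {1,…,m}) with |U'| = q, then the set S = {l^c_u : u ∈ U ∖ U', c ∈ {1,2}} ∪ {r_u : u ∈ U'} ∪ R_2 is a minimal vertex cover of G of size (n − q) + n + m(n+1). -/

import Mathlib

/-- Vertices of the hitting-set graph built from an instance with ground set
`Fin n` and sets `F_1, …, F_m`:  `l c u` (for `c ∈ Fin 2`) are the vertices
`l^1_u, l^2_u`, `r1 u` is `r_u`, and `r2 c i` (for `c ∈ Fin (n+1)`) is `r^c_i`. -/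
inductive HV (n m : ℕ) : Type where
  | l : Fin 2 → Fin n → HV n m
  | r1 : Fin n → HV n m
  | r2 : Fin (n + 1) → Fin m → HV n m

/-- The base relation inducing the edges of the hitting-set graph:
`{l^c_u, r_u}` for all `u, c`, and `{l^1_u, r^c_i}` whenever `u ∈ F i`. -/
def hsRel {n m : ℕ} (F : Fin m → Finset (Fin n)) : HV n m → HV n m → Prop
  | .l _ u, .r1 u' => u = u'
  | .l c u, .r2 _ i => c = 0 ∧ u ∈ F i
  | _, _ => False

/-- The hitting-set graph of the instance `F`. -/
def hsGraph {n m : ℕ} (F : Fin m → Finset (Fin n)) : SimpleGraph (HV n m) :=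
  SimpleGraph.fromRel (hsRel F)

/-- The left side `L = {l^c_u}`. -/
def Lset (n m : ℕ) : Set (HV n m) := {x | ∃ c u, x = HV.l c u}

/-- `R_1 = {r_u}`. -/
def R1set (n m : ℕ) : Set (HV n m) := {x | ∃ u, x = HV.r1 u}

/-- `R_2 = {r^c_i}`. -/
def R2set (n m : ℕ) : Set (HV n m) := {x | ∃ c i, x = HV.r2 c i}

/-- `S` is a vertex cover of `G`: it contains at least one endpoint of every edge. -/
def IsVC {α : Type*} (G : SimpleGraph α) (S : Set α) : Prop :=
  ∀ ⦃u v : α⦄, G.Adj u v → u ∈ S ∨ v ∈ S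

/-- `S` is a minimal vertex cover of `G`. -/
def IsMinVC {α : Type*} (G : SimpleGraph α) (S : Set α) : Prop :=
  IsVC G S ∧ ∀ T : Set α, T ⊂ S → ¬ IsVC G T

/-!
Every edge of the hitting-set graph either meets `R_2 ⊆ S` or is `l^c_u r_u`, and `S` contains
`r_u` exactly when it misses `l^c_u`; hence `S` is a vertex cover. It is minimal because each
of its vertices has a neighbour outside `S`: `r_u` for `l^c_u` (`u ∉ U'`), `l^1_u` for `r_u`
(`u ∈ U'`), and `l^1_u` for `r^c_i`, where `u ∈ U' ∩ F_i` is supplied by the hitting-set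
property. Dropping any vertex of `S` thus uncovers an edge. Counting the three blocks gives
`|S| = 2(n - q) + q + m(n + 1)`.
-/

section VertexCover

variable {α : Type*}

theorem isVC_fromRel {r : α → α → Prop} {S : Set α} (h : ∀ a b, r a b → a ∈ S ∨ b ∈ S) :
    IsVC (SimpleGraph.fromRel r) S := by
  intro a b hab
  rcases (SimpleGraph.fromRel_adj r a b).1 hab |>.2 with hr | hr
  · exact h a b hr
  · exact (h b a hr).symm

theorem IsVC.isMinVC_of_forall_exists_adj_notMem {G : SimpleGraph α} {S : Set α}
    (hS : IsVC G S) (h : ∀ v ∈ S, ∃ w, G.Adj v w ∧ w ∉ S) : IsMinVC G S := by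
  refine ⟨hS, fun T hTS hT => ?_⟩
  obtain ⟨v, hvS, hvT⟩ := Set.exists_of_ssubset hTS
  obtain ⟨w, hvw, hwS⟩ := h v hvS
  rcases hT hvw with hv | hw
  · exact hvT hv
  · exact hwS (hTS.subset hw)

end VertexCover

namespace HV

variable {n m : ℕ}

def equivSum : HV n m ≃ (Fin 2 × Fin n) ⊕ Fin n ⊕ (Fin (n + 1) × Fin m) where
  toFun
    | l c u => .inl (c, u)
    | r1 u => .inr (.inl u)
    | r2 c i => .inr (.inr (c, i))
  invFun
    | .inl (c, u) => l c u
    | .inr (.inl u) => r1 u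
    | .inr (.inr (c, i)) => r2 c i
  left_inv x := by cases x <;> rfl
  right_inv x := by rcases x with ⟨c, u⟩ | u | ⟨c, i⟩ <;> rfl

end HV

section HittingSetGraph

variable {n m : ℕ}

theorem hsGraph_adj_l_r1 (F : Fin m → Finset (Fin n)) (c : Fin 2) (u : Fin n) :
    (hsGraph F).Adj (.l c u) (.r1 u) :=
  (SimpleGraph.fromRel_adj _ _ _).2 ⟨nofun, .inl rfl⟩

theorem hsGraph_adj_l_r2 (F : Fin m → Finset (Fin n)) {u : Fin n} {i : Fin m} (hu : u ∈ F i)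
    (c : Fin (n + 1)) : (hsGraph F).Adj (.l 0 u) (.r2 c i) :=
  (SimpleGraph.fromRel_adj _ _ _).2 ⟨nofun, .inl ⟨rfl, hu⟩⟩

def hsCover (m : ℕ) (U' : Finset (Fin n)) : Set (HV n m) :=
  {x | ∃ c u, u ∉ U' ∧ x = HV.l c u} ∪ {x | ∃ u ∈ U', x = HV.r1 u} ∪ R2set n m

@[simp]
theorem l_mem_hsCover {U' : Finset (Fin n)} {c : Fin 2} {u : Fin n} : HV.l c u ∈ hsCover m U' ↔ u ∉ U' := by
  fin_cases c <;> simp [hsCover, R2set]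

@[simp]
theorem r1_mem_hsCover {U' : Finset (Fin n)} {u : Fin n} : HV.r1 u ∈ hsCover m U' ↔ u ∈ U' := by
  simp [hsCover, R2set]

@[simp]
theorem r2_mem_hsCover {U' : Finset (Fin n)} {c : Fin (n + 1)} {i : Fin m} : HV.r2 c i ∈ hsCover m U' := by
  simp [hsCover, R2set]

theorem isVC_hsCover (F : Fin m → Finset (Fin n)) (U' : Finset (Fin n)) :
    IsVC (hsGraph F) (hsCover m U') := by
  refine isVC_fromRel fun a b hab => ?_
  cases a <;> cases b <;> simp only [hsRel] at hab
  case l.r1 u _ =>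
    subst hab
    by_cases hu : u ∈ U' <;> simp [hu]
  case l.r2 => simp

theorem isMinVC_hsCover (F : Fin m → Finset (Fin n)) {U' : Finset (Fin n)}
    (hU' : ∀ i, ∃ u ∈ U', u ∈ F i) : IsMinVC (hsGraph F) (hsCover m U') := by
  refine (isVC_hsCover F U').isMinVC_of_forall_exists_adj_notMem fun v hv => ?_
  cases v with
  | l c u => exact ⟨.r1 u, hsGraph_adj_l_r1 F c u, by simpa using hv⟩
  | r1 u => exact ⟨.l 0 u, (hsGraph_adj_l_r1 F 0 u).symm, by simpa using hv⟩
  | r2 c i =>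
    obtain ⟨u, huU', huF⟩ := hU' i
    exact ⟨.l 0 u, (hsGraph_adj_l_r2 F huF c).symm, by simpa using huU'⟩

theorem hsCover_eq_map_equivSum (U' : Finset (Fin n)) :
    hsCover m U' = ↑(((Finset.univ ×ˢ U'ᶜ).disjSum (U'.disjSum Finset.univ)).map
      HV.equivSum.symm.toEmbedding : Finset (HV n m)) := by
  ext x
  rw [Finset.mem_coe, Finset.mem_map_equiv, Equiv.symm_symm]
  cases x <;> simp [HV.equivSum]

theorem ncard_hsCover (U' : Finset (Fin n)) :
    (hsCover m U').ncard = (n - U'.card) + n + m * (n + 1) := by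
  have hle : U'.card ≤ n := by simpa using U'.card_le_univ
  rw [hsCover_eq_map_equivSum, Set.ncard_coe_finset, Finset.card_map, Finset.card_disjSum,
    Finset.card_disjSum, Finset.card_product, Finset.card_compl]
  simp only [Finset.card_univ, Fintype.card_prod, Fintype.card_fin]
  rw [Nat.mul_comm (n + 1) m]
  omega

end HittingSetGraph

/-- If `U' ⊆ U` is a hitting set of size `q`, then
`S = {l^c_u : u ∉ U'} ∪ {r_u : u ∈ U'} ∪ R_2` is a minimal vertex cover of the
hitting-set graph, of size `(n - q) + n + m(n+1)`. -/
theorem stmt10 {n m : ℕ} (F : Fin m → Finset (Fin n))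
    (U' : Finset (Fin n)) (hU' : ∀ i : Fin m, ∃ u ∈ U', u ∈ F i)
    (q : ℕ) (hq : q = U'.card)
    (S : Set (HV n m))
    (hS : S = {x | ∃ c u, u ∉ U' ∧ x = HV.l c u} ∪
              {x | ∃ u ∈ U', x = HV.r1 u} ∪ R2set n m) :
    IsMinVC (hsGraph F) S ∧ S.ncard = (n - q) + n + m * (n + 1) := by
  change S = hsCover m U' at hS
  subst hS hq
  exact ⟨isMinVC_hsCover F hU', ncard_hsCover U'⟩
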